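/- The mutilated chessboard cannot be tiled by dominoes: there is no partition of the 62 squares of an 8×8 chessboard with two opposite corners removed into 31 pairs of horizontally or vertically adjacent squares. -/

import Mathlib

/-!
Colour the cell `(i, j)` dark when `i + j` is even. Adjacent cells have opposite colours, so
each domino covers exactly one dark cell and 31 disjoint dominoes cover 31 dark cells. Both
removed corners are dark, however, so the mutilated board has only 30 dark cells.
-/

/-- Two cells are adjacent if they differ by 1 in exactly one coordinate. -/
def ChessAdj (a b : ℕ × ℕ) : Prop :=
  (a.1 = b.1 ∧ (a.2 + 1 = b.2 ∨ b.2 + 1 = a.2)) ∨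
  (a.2 = b.2 ∧ (a.1 + 1 = b.1 ∨ b.1 + 1 = a.1))

/-- The 8×8 board with the opposite corners (0,0) and (7,7) removed. -/
def mutilatedBoard : Finset (ℕ × ℕ) :=
  (((Finset.range 8) ×ˢ (Finset.range 8)).erase (0, 0)).erase (7, 7)

theorem Finset.card_filter_pair_eq_one {α : Type*} [DecidableEq α] {p : α → Prop}
    [DecidablePred p] {a b : α} (h : p a ↔ ¬ p b) : (({a, b} : Finset α).filter p).card = 1 := by
  by_cases ha : p a
  · have hab : a ≠ b := fun hab => h.mp ha (hab ▸ ha)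
    simp [Finset.filter_insert, Finset.filter_singleton, ha, h.mp ha]
  · simp [Finset.filter_insert, Finset.filter_singleton, ha, not_not.mp (mt h.mpr ha)]

theorem Finset.card_filter_sup_id_eq_card {α : Type*} [DecidableEq α] {p : α → Prop}
    [DecidablePred p] {D : Finset (Finset α)}
    (hD : ∀ d ∈ D, ∀ e ∈ D, d ≠ e → Disjoint d e) (hp : ∀ d ∈ D, (d.filter p).card = 1) :
    ((D.sup id).filter p).card = D.card := by
  rw [Finset.sup_eq_biUnion, Finset.filter_biUnion]
  simp only [id_eq]
  rw [Finset.card_biUnion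
    (fun d hd e he hne => Finset.disjoint_filter_filter (hD d hd e he hne)),
    Finset.sum_congr rfl hp, Finset.card_eq_sum_ones]

def IsDark (c : ℕ × ℕ) : Prop := (c.1 + c.2) % 2 = 0

instance : DecidablePred IsDark := fun c => inferInstanceAs (Decidable ((c.1 + c.2) % 2 = 0))

theorem ChessAdj.isDark_iff_not {a b : ℕ × ℕ} (h : ChessAdj a b) : IsDark a ↔ ¬ IsDark b := by
  unfold IsDark
  rcases h with ⟨_, _⟩ | ⟨_, _⟩ <;> omega

theorem card_filter_isDark_mutilatedBoard : (mutilatedBoard.filter IsDark).card = 30 := by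
  decide

theorem mutilated_chessboard_no_tiling :
    ¬ ∃ D : Finset (Finset (ℕ × ℕ)),
      D.card = 31 ∧
      (∀ d ∈ D, ∃ a b : ℕ × ℕ, ChessAdj a b ∧ d = {a, b}) ∧
      (∀ d ∈ D, ∀ e ∈ D, d ≠ e → Disjoint d e) ∧
      D.sup id = mutilatedBoard := by
  rintro ⟨D, hcard, hdomino, hdisj, hcover⟩
  have hdark : ∀ d ∈ D, (d.filter IsDark).card = 1 := by
    intro d hd
    obtain ⟨a, b, hab, rfl⟩ := hdomino d hd
    exact Finset.card_filter_pair_eq_one hab.isDark_iff_not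
  have hcount := Finset.card_filter_sup_id_eq_card hdisj hdark
  rw [hcover, card_filter_isDark_mutilatedBoard, hcard] at hcount
  omega
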